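/- Suppose smooth functions κ, τ, λ, γ on ℝ² satisfy the zero-curvature condition U_v − V_u + UV − VU = 0, where U has rows (0, κ, 0), (κ, 0, −τ), (0, τ, 0) and V has rows (0, λτ, λ_u), (λτ, 0, γ), (λ_u, −γ, 0). Then κ_v = λτ_u + 2λ_u τ, τ_v = λ_u κ − γ_u, and λ_uu = λτ² + κγ. -/

import Mathlib

/-- Partial derivative with respect to the first variable. -/
noncomputable def pu (f : ℝ → ℝ → ℝ) : ℝ → ℝ → ℝ := fun u v => deriv (fun x => f x v) u

/-- Partial derivative with respect to the second variable. -/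
noncomputable def pv (f : ℝ → ℝ → ℝ) : ℝ → ℝ → ℝ := fun u v => deriv (fun y => f u y) v

lemma diff_fst (f : ℝ → ℝ → ℝ) (hf : ContDiff ℝ (⊤ : ℕ∞) (Function.uncurry f)) (v : ℝ) :
    Differentiable ℝ (fun x => f x v) :=
  fun x => ((hf.differentiable (by simp)).comp ((differentiable_id).prodMk (differentiable_const v))) x

/-- Gauss–Mainardi–Codazzi equations for Case 3 Razzaboni surfaces in Minkowski
3-space, obtained from the zero-curvature condition U_v - V_u + UV - VU = 0. -/
theorem razzaboni_case3_GMC (κ τ lam γ : ℝ → ℝ → ℝ)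
    (hκ : ContDiff ℝ (⊤ : ℕ∞) (Function.uncurry κ))
    (hτ : ContDiff ℝ (⊤ : ℕ∞) (Function.uncurry τ))
    (hlam : ContDiff ℝ (⊤ : ℕ∞) (Function.uncurry lam))
    (hγ : ContDiff ℝ (⊤ : ℕ∞) (Function.uncurry γ))
    (U V : ℝ → ℝ → Matrix (Fin 3) (Fin 3) ℝ)
    (hU : ∀ u v, U u v = !![0, κ u v, 0; κ u v, 0, -τ u v; 0, τ u v, 0])
    (hV : ∀ u v, V u v =
      !![0, lam u v * τ u v, pu lam u v;
         lam u v * τ u v, 0, γ u v;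
         pu lam u v, -γ u v, 0])
    (hZC : ∀ u v, ∀ i j : Fin 3,
      deriv (fun y => U u y i j) v - deriv (fun x => V x v i j) u +
        ((U u v * V u v) i j - (V u v * U u v) i j) = 0) :
    ∀ u v, pv κ u v = lam u v * pu τ u v + 2 * pu lam u v * τ u v ∧
      pv τ u v = pu lam u v * κ u v - pu γ u v ∧
      pu (pu lam) u v = lam u v * (τ u v) ^ 2 + κ u v * γ u v := by
  intro u v
  have h01 := hZC u v 0 1
  have h12 := hZC u v 1 2
  have h02 := hZC u v 0 2
  simp [hU, hV, Matrix.mul_apply, Fin.sum_univ_three] at h01 h12 h02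
  have hlu : Differentiable ℝ (fun x => lam x v) := diff_fst lam hlam v
  have htu : Differentiable ℝ (fun x => τ x v) := diff_fst τ hτ v
  have hmul : deriv (fun x => lam x v * τ x v) u
      = pu lam u v * τ u v + lam u v * pu τ u v := by
    simpa [pu] using deriv_fun_mul (hlu u) (htu u)
  refine ⟨?_, ?_, ?_⟩
  · simp only [pv, pu] at *
    rw [hmul] at h01
    linarith
  · simp only [pv, pu] at *
    linarith
  · simp only [pu] at *
    nlinarith [h02]
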